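/- arXiv:2408.16211 — 5 statements merged into one kernel-verified Lean document; each statement's English description precedes it below -/
import Mathlib

section
/- K-Knuth equivalence is preserved by restriction to an interval: if words w1 and w2 are K-Knuth equivalent, and for an integer interval [a,b] we let w_i|_{[a,b]} denote the word obtained from w_i by deleting all letters not in [a,b], then w1|_{[a,b]} and w2|_{[a,b]} are K-Knuth equivalent. -/
/-- One application, inside an arbitrary context, of a K-Knuth generating relation:
`xzy ≡ zxy` and `yxz ≡ yzx` for `x < y < z`, `x ≡ xx`, and `xyx ≡ yxy`. -/
inductive KKnuthRel : List ℕ+ → List ℕ+ → Prop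
  | rel1 (u v : List ℕ+) (x y z : ℕ+) (h1 : x < y) (h2 : y < z) :
      KKnuthRel (u ++ [x, z, y] ++ v) (u ++ [z, x, y] ++ v)
  | rel2 (u v : List ℕ+) (x y z : ℕ+) (h1 : x < y) (h2 : y < z) :
      KKnuthRel (u ++ [y, x, z] ++ v) (u ++ [y, z, x] ++ v)
  | rel3 (u v : List ℕ+) (x : ℕ+) :
      KKnuthRel (u ++ [x] ++ v) (u ++ [x, x] ++ v)
  | rel4 (u v : List ℕ+) (x y : ℕ+) :
      KKnuthRel (u ++ [x, y, x] ++ v) (u ++ [y, x, y] ++ v)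

/-- K-Knuth equivalence of words: the equivalence closure of the generating moves. -/
def KKnuth : List ℕ+ → List ℕ+ → Prop := Relation.EqvGen KKnuthRel

/-- The restriction of a word to the letters lying in the interval `[a, b]`. -/
def restrict (a b : ℕ+) (w : List ℕ+) : List ℕ+ :=
  w.filter fun x => decide (a ≤ x ∧ x ≤ b)

theorem List.filter_cons_cons_comm {α : Type*} {p : α → Bool} {x z : α} (h : ¬(p x ∧ p z))
    (w : List α) : (x :: z :: w).filter p = (z :: x :: w).filter p := by
  cases hx : p x <;> cases hz : p z <;> simp_all

section Filter

variable {p : ℕ+ → Bool}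

/-- Filtering turns each generating move into a move or an equality. Convexity of `p` rules out
keeping `x` and `z` but deleting `y` in `xzy ≡ zxy` and `yxz ≡ yzx`; once one of `x`, `z` is
deleted, the two sides agree. -/
theorem KKnuthRel.kKnuth_filter (hp : {x | p x}.OrdConnected) {s t : List ℕ+}
    (h : KKnuthRel s t) : KKnuth (s.filter p) (t.filter p) := by
  cases h with
  | rel1 u v x y z hxy hyz =>
    by_cases hxz : p x ∧ p z
    · have hy : p y := hp.out hxz.1 hxz.2 ⟨hxy.le, hyz.le⟩
      simp only [List.filter_append, List.filter_cons, hxz, hy, if_true, List.filter_nil]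
      exact .rel _ _ (.rel1 _ _ x y z hxy hyz)
    · simp only [List.append_assoc, List.cons_append, List.nil_append, List.filter_append,
        List.filter_cons_cons_comm hxz]
      exact .refl _
  | rel2 u v x y z hxy hyz =>
    by_cases hxz : p x ∧ p z
    · have hy : p y := hp.out hxz.1 hxz.2 ⟨hxy.le, hyz.le⟩
      simp only [List.filter_append, List.filter_cons, hxz, hy, if_true, List.filter_nil]
      exact .rel _ _ (.rel2 _ _ x y z hxy hyz)
    · simp only [List.append_assoc, List.cons_append, List.nil_append, List.filter_append,
        List.filter_cons (x := y), List.filter_cons_cons_comm hxz]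
      exact .refl _
  | rel3 u v x =>
    cases hx : p x <;>
      simp only [List.filter_append, List.filter_cons, hx, Bool.false_eq_true, if_true,
        if_false, List.filter_nil]
    · exact .refl _
    · exact .rel _ _ (.rel3 _ _ x)
  | rel4 u v x y =>
    cases hx : p x <;> cases hy : p y <;>
      simp only [List.filter_append, List.filter_cons, hx, hy, Bool.false_eq_true, if_true,
        if_false, List.filter_nil]
    · exact .refl _
    · exact .rel _ _ (.rel3 _ _ y)
    · exact .symm _ _ (.rel _ _ (.rel3 _ _ x))
    · exact .rel _ _ (.rel4 _ _ x y)

theorem KKnuth.filter (hp : {x | p x}.OrdConnected) {s t : List ℕ+} (h : KKnuth s t) :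
    KKnuth (s.filter p) (t.filter p) :=
  ((Relation.EqvGen.is_equivalence KKnuthRel).comap (List.filter p)).eqvGen_iff.mp
    (h.mono fun _ _ hr => hr.kKnuth_filter hp)

end Filter

/-- K-Knuth equivalence is preserved by restriction to an integer interval. -/
theorem kKnuth_restrict (a b : ℕ+) (w1 w2 : List ℕ+) (h : KKnuth w1 w2) :
    KKnuth (restrict a b w1) (restrict a b w2) :=
  h.filter <| by simp only [decide_eq_true_eq]; exact Set.ordConnected_Icc
end

section
/- Each of the four K-Knuth generating relations preserves the length of the longest strictly increasing subsequence: if w2 is obtained from w1 by one application of xzy → zxy (x<y<z), yxz → yzx (x<y<z), x → xx, or xyx → yxy (in arbitrary context), then lis(w1) = lis(w2). -/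
/-- Length of the longest strictly increasing subsequence of a word. -/
def lis (w : List ℕ+) : ℕ :=
  ((w.sublists.filter fun s => decide (List.IsChain (· < ·) s)).map List.length).foldr max 0

/-- Length of the longest strictly decreasing subsequence of a word. -/
def lds (w : List ℕ+) : ℕ :=
  ((w.sublists.filter fun s => decide (List.IsChain (· > ·) s)).map List.length).foldr max 0


/-!
An increasing subsequence of `u ++ m ++ v` meets the middle segment `m` in an increasing subword
`b`. Replacing `b` by an increasing word `b'` of the same length whose first letter is no smaller
and whose last letter is no larger keeps the whole subsequence increasing. Hence
`lis (u ++ m ++ v) ≤ lis (u ++ m' ++ v)` as soon as every increasing subword of `m` is dominated in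
this sense by an increasing subword of `m'`. For the two sides of each K-Knuth relation this is a
finite check on the subwords of a word of length at most three: apart from subwords common to both
sides, the only replacements needed are `xz ↦ xy` (from `xzy` into `zxy`) and `xz ↦ yz`
(from `yxz` into `yzx`).
-/

section Dominates

variable {α : Type*} [Preorder α] {x y z : α}

def Dominates (b' b : List α) : Prop :=
  b'.length = b.length ∧ (∀ p ∈ b.head?, ∀ p' ∈ b'.head?, p ≤ p') ∧
    ∀ q ∈ b.getLast?, ∀ q' ∈ b'.getLast?, q' ≤ q

def SegmentDominates (m' m : List α) : Prop :=
  ∀ b, b.Sublist m → b.IsChain (· < ·) →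
    ∃ b', b'.Sublist m' ∧ b'.IsChain (· < ·) ∧ Dominates b' b

theorem List.IsChain.append_append_of_dominates {a b b' c : List α}
    (h : (a ++ b ++ c).IsChain (· < ·)) (hd : Dominates b' b) (hb' : b'.IsChain (· < ·)) :
    (a ++ b' ++ c).IsChain (· < ·) := by
  obtain ⟨hlen, hhead, hlast⟩ := hd
  obtain rfl | hb := eq_or_ne b []
  · rwa [List.eq_nil_of_length_eq_zero hlen]
  have hb'0 : b' ≠ [] := List.ne_nil_of_length_pos (hlen ▸ List.length_pos_of_ne_nil hb)
  simp only [List.isChain_append, List.getLast?_append_of_ne_nil _ hb,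
    List.getLast?_append_of_ne_nil _ hb'0] at h ⊢
  obtain ⟨⟨ha, -, hab⟩, hc, hbc⟩ := h
  refine ⟨⟨ha, hb', fun p hp q' hq' => ?_⟩, hc, fun p' hp' q hq => ?_⟩
  · exact (hab p hp _ (List.head?_eq_some_head hb)).trans_le
      (hhead _ (List.head?_eq_some_head hb) q' hq')
  · exact (hlast _ (List.getLast?_eq_some_getLast hb) p' hp').trans_lt
      (hbc _ (List.getLast?_eq_some_getLast hb) q hq)

theorem segmentDominates_iff_forall_mem_sublists {m' m : List α} :
    SegmentDominates m' m ↔ ∀ b ∈ m.sublists, b.IsChain (· < ·) →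
      ∃ b' ∈ m'.sublists, b'.IsChain (· < ·) ∧ Dominates b' b := by
  simp only [SegmentDominates, List.mem_sublists]

theorem segmentDominates_zxy_xzy (h1 : x < y) (h2 : y < z) :
    SegmentDominates [z, x, y] [x, z, y] := by
  simp +contextual [segmentDominates_iff_forall_mem_sublists, List.sublists, Dominates, h1, h2,
    h1.trans h2, lt_asymm, le_of_lt]

theorem segmentDominates_xzy_zxy (h1 : x < y) (h2 : y < z) :
    SegmentDominates [x, z, y] [z, x, y] := by
  simp +contextual [segmentDominates_iff_forall_mem_sublists, List.sublists, Dominates, h1, h2,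
    h1.trans h2, lt_asymm, le_of_lt]

theorem segmentDominates_yzx_yxz (h1 : x < y) (h2 : y < z) :
    SegmentDominates [y, z, x] [y, x, z] := by
  simp +contextual [segmentDominates_iff_forall_mem_sublists, List.sublists, Dominates, h1, h2,
    h1.trans h2, lt_asymm, le_of_lt]

theorem segmentDominates_yxz_yzx (h1 : x < y) (h2 : y < z) :
    SegmentDominates [y, x, z] [y, z, x] := by
  simp +contextual [segmentDominates_iff_forall_mem_sublists, List.sublists, Dominates, h1, h2,
    h1.trans h2, lt_asymm, le_of_lt]

theorem segmentDominates_xx_x : SegmentDominates [x, x] [x] := by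
  simp [segmentDominates_iff_forall_mem_sublists, List.sublists, Dominates]

theorem segmentDominates_x_xx : SegmentDominates [x] [x, x] := by
  simp [segmentDominates_iff_forall_mem_sublists, List.sublists, Dominates]

theorem segmentDominates_yxy_xyx : SegmentDominates [y, x, y] [x, y, x] := by
  simp +contextual [segmentDominates_iff_forall_mem_sublists, List.sublists, Dominates, lt_asymm,
    le_of_lt]

end Dominates

theorem le_lis {s w : List ℕ+} (hs : s.Sublist w) (hc : s.IsChain (· < ·)) :
    s.length ≤ lis w :=
  List.le_max_of_le
    (List.mem_map_of_mem (List.mem_filter.2 ⟨List.mem_sublists.2 hs, decide_eq_true hc⟩)) le_rfl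

theorem lis_le {w : List ℕ+} {n : ℕ}
    (h : ∀ s : List ℕ+, s.Sublist w → s.IsChain (· < ·) → s.length ≤ n) : lis w ≤ n :=
  List.max_le_of_forall_le _ _ fun _ hk => by
    obtain ⟨s, hs, rfl⟩ := List.mem_map.1 hk
    obtain ⟨hsw, hc⟩ := List.mem_filter.1 hs
    exact h s (List.mem_sublists.1 hsw) (of_decide_eq_true hc)

theorem lis_append_le_of_segmentDominates {m m' : List ℕ+} (h : SegmentDominates m' m)
    (u v : List ℕ+) : lis (u ++ m ++ v) ≤ lis (u ++ m' ++ v) := by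
  refine lis_le fun s hs hc => ?_
  obtain ⟨t, c, rfl, ht, hcv⟩ := List.sublist_append_iff.1 hs
  obtain ⟨a, b, rfl, hau, hbm⟩ := List.sublist_append_iff.1 ht
  obtain ⟨b', hb'm, hb', hd⟩ := h b hbm hc.left_of_append.right_of_append
  calc (a ++ b ++ c).length = (a ++ b' ++ c).length := by simp [hd.1]
    _ ≤ lis (u ++ m' ++ v) :=
      le_lis ((hau.append hb'm).append hcv) (hc.append_append_of_dominates hd hb')

theorem lis_append_eq_of_segmentDominates {m m' : List ℕ+} (h : SegmentDominates m' m)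
    (h' : SegmentDominates m m') (u v : List ℕ+) : lis (u ++ m ++ v) = lis (u ++ m' ++ v) :=
  (lis_append_le_of_segmentDominates h u v).antisymm (lis_append_le_of_segmentDominates h' u v)

/-- Each K-Knuth generating move (applied in an arbitrary context) preserves the
length of the longest strictly increasing subsequence. -/
theorem kKnuthRel_lis (w1 w2 : List ℕ+) (h : KKnuthRel w1 w2) :
    lis w1 = lis w2 := by
  cases h with
  | rel1 u v x y z h1 h2 =>
    exact lis_append_eq_of_segmentDominates (segmentDominates_zxy_xzy h1 h2)
      (segmentDominates_xzy_zxy h1 h2) u v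
  | rel2 u v x y z h1 h2 =>
    exact lis_append_eq_of_segmentDominates (segmentDominates_yzx_yxz h1 h2)
      (segmentDominates_yxz_yzx h1 h2) u v
  | rel3 u v x =>
    exact lis_append_eq_of_segmentDominates segmentDominates_xx_x segmentDominates_x_xx u v
  | rel4 u v x y =>
    exact lis_append_eq_of_segmentDominates segmentDominates_yxy_xyx segmentDominates_yxy_xyx u v
end

section
/- Each of the four K-Knuth generating relations preserves the length of the longest strictly decreasing subsequence: if w2 is obtained from w1 by one application of xzy → zxy (x<y<z), yxz → yzx (x<y<z), x → xx, or xyx → yxy (in arbitrary context), then lds(w1) = lds(w2). -/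
/-!
A strictly decreasing subsequence of `u ++ m ++ v` splits as `a ++ b ++ c` with `b` a decreasing
subsequence of `m`. Hence `lds (u ++ m₁ ++ v) ≤ lds (u ++ m₂ ++ v)` as soon as every decreasing
subsequence `b` of `m₁` can be traded for one of `m₂` of the same length that fits into every
decreasing context that `b` fits into. For the four moves, both sides have the same decreasing
subsequences, except for `zx` in `zxy` and in `yzx`; it is traded for `zy` and `yx` respectively,
which start no higher and end no lower.
-/

open List

lemma le_lds {w s : List ℕ+} (hs : s <+ w) (hc : IsChain (· > ·) s) : s.length ≤ lds w :=
  le_max_of_le' 0 (mem_map_of_mem (mem_filter.2 ⟨mem_sublists.2 hs, decide_eq_true hc⟩)) le_rfl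

lemma lds_le {w : List ℕ+} {n : ℕ} (h : ∀ s, s <+ w → IsChain (· > ·) s → s.length ≤ n) :
    lds w ≤ n :=
  max_le_of_forall_le _ n fun _ hk => by
    obtain ⟨s, hs, rfl⟩ := mem_map.1 hk
    simp only [mem_filter, mem_sublists, decide_eq_true_eq] at hs
    exact h s hs.1 hs.2

lemma lds_append_le_append {m₁ m₂ : List ℕ+}
    (H : ∀ b, b <+ m₁ → IsChain (· > ·) b → ∃ b', b' <+ m₂ ∧ b'.length = b.length ∧
      ∀ a c : List ℕ+, IsChain (· > ·) (a ++ b ++ c) → IsChain (· > ·) (a ++ b' ++ c))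
    (u v : List ℕ+) : lds (u ++ m₁ ++ v) ≤ lds (u ++ m₂ ++ v) := by
  refine lds_le fun s hs hc => ?_
  obtain ⟨s', c, rfl, hs', hc_v⟩ := sublist_append_iff.1 hs
  obtain ⟨a, b, rfl, ha, hb⟩ := sublist_append_iff.1 hs'
  obtain ⟨b', hb', hlen, hfit⟩ := H b hb (hc.sublist (by simp))
  calc (a ++ b ++ c).length = (a ++ b' ++ c).length := by simp [hlen]
    _ ≤ _ := le_lds ((ha.append hb').append hc_v) (hfit a c hc)

lemma lds_append_le_append_of_sublist {m₁ m₂ : List ℕ+}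
    (H : ∀ b, b <+ m₁ → IsChain (· > ·) b → b <+ m₂) (u v : List ℕ+) :
    lds (u ++ m₁ ++ v) ≤ lds (u ++ m₂ ++ v) :=
  lds_append_le_append (fun b hb hc => ⟨b, H b hb hc, rfl, fun _ _ h => h⟩) u v

lemma List.IsChain.append_pair_append_of_le {α : Type*} [Preorder α] {a c : List α}
    {p q p' q' : α}
    (h : IsChain (· > ·) (a ++ [p, q] ++ c)) (hp : p' ≤ p) (hpq : q' < p') (hq : q ≤ q') :
    IsChain (· > ·) (a ++ [p', q'] ++ c) := by
  simp only [append_assoc, cons_append, nil_append, isChain_append, isChain_cons_cons,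
    head?_cons, Option.mem_def, Option.some.injEq, forall_eq'] at h ⊢
  obtain ⟨ha, ⟨-, hqc⟩, hlast⟩ := h
  exact ⟨ha, ⟨hpq, hqc.imp_head fun h => hq.trans_lt' h⟩, fun s hs => hp.trans_lt (hlast s hs)⟩

lemma lds_append_le_append_of_sublist_or_eq_pair {m₁ m₂ : List ℕ+} {p q p' q' : ℕ+}
    (H : ∀ b, b <+ m₁ → IsChain (· > ·) b → b <+ m₂ ∨ b = [p, q]) (hsub : [p', q'] <+ m₂)
    (hp : p' ≤ p) (hpq : q' < p') (hq : q ≤ q') (u v : List ℕ+) :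
    lds (u ++ m₁ ++ v) ≤ lds (u ++ m₂ ++ v) := by
  refine lds_append_le_append (fun b hb hc => ?_) u v
  rcases H b hb hc with hb₂ | rfl
  · exact ⟨b, hb₂, rfl, fun _ _ h => h⟩
  · exact ⟨[p', q'], hsub, rfl, fun _ _ h => h.append_pair_append_of_le hp hpq hq⟩

section Moves

variable {α : Type*} {b : List α}

lemma sublist_triple_cases {p q r : α} (h : b <+ [p, q, r]) :
    b = [] ∨ b = [p] ∨ b = [q] ∨ b = [r] ∨ b = [p, q] ∨ b = [p, r] ∨ b = [q, r] ∨
      b = [p, q, r] := by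
  have := mem_sublists.2 h
  simp [sublists] at this
  tauto

variable [Preorder α] {x y z : α}

lemma sublist_zxy_of_sublist_xzy (hxy : x < y) (hyz : y < z) (hb : b <+ [x, z, y])
    (hc : IsChain (· > ·) b) : b <+ [z, x, y] := by
  rcases sublist_triple_cases hb with rfl | rfl | rfl | rfl | rfl | rfl | rfl | rfl <;>
    grind

lemma sublist_xzy_or_eq_of_sublist_zxy (hxy : x < y) (hb : b <+ [z, x, y])
    (hc : IsChain (· > ·) b) : b <+ [x, z, y] ∨ b = [z, x] := by
  rcases sublist_triple_cases hb with rfl | rfl | rfl | rfl | rfl | rfl | rfl | rfl <;>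
    grind

lemma sublist_yzx_of_sublist_yxz (hxy : x < y) (hyz : y < z) (hb : b <+ [y, x, z])
    (hc : IsChain (· > ·) b) : b <+ [y, z, x] := by
  rcases sublist_triple_cases hb with rfl | rfl | rfl | rfl | rfl | rfl | rfl | rfl <;>
    grind

lemma sublist_yxz_or_eq_of_sublist_yzx (hyz : y < z) (hb : b <+ [y, z, x])
    (hc : IsChain (· > ·) b) : b <+ [y, x, z] ∨ b = [z, x] := by
  rcases sublist_triple_cases hb with rfl | rfl | rfl | rfl | rfl | rfl | rfl | rfl <;>
    grind

lemma sublist_x_of_sublist_xx (hb : b <+ [x, x]) (hc : IsChain (· > ·) b) : b <+ [x] := by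
  have := mem_sublists.2 hb
  simp [sublists] at this
  rcases this with rfl | rfl | rfl <;> simp_all

lemma sublist_yxy_of_sublist_xyx (hb : b <+ [x, y, x]) (hc : IsChain (· > ·) b) :
    b <+ [y, x, y] := by
  rcases sublist_triple_cases hb with rfl | rfl | rfl | rfl | rfl | rfl | rfl | rfl <;>
    grind

end Moves

/-- Each K-Knuth generating move (applied in an arbitrary context) preserves the
length of the longest strictly decreasing subsequence. -/
theorem kKnuthRel_lds (w1 w2 : List ℕ+) (h : KKnuthRel w1 w2) :
    lds w1 = lds w2 := by
  cases h with
  | rel1 u v x y z hxy hyz =>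
    exact le_antisymm
      (lds_append_le_append_of_sublist (fun _ => sublist_zxy_of_sublist_xzy hxy hyz) u v)
      (lds_append_le_append_of_sublist_or_eq_pair
        (fun _ => sublist_xzy_or_eq_of_sublist_zxy hxy) (by simp) le_rfl hyz hxy.le u v)
  | rel2 u v x y z hxy hyz =>
    exact le_antisymm
      (lds_append_le_append_of_sublist (fun _ => sublist_yzx_of_sublist_yxz hxy hyz) u v)
      (lds_append_le_append_of_sublist_or_eq_pair
        (fun _ => sublist_yxz_or_eq_of_sublist_yzx hyz) (by simp) hyz.le hxy le_rfl u v)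
  | rel3 u v x =>
    exact le_antisymm
      (lds_append_le_append_of_sublist (fun _ hb _ => hb.trans (by simp)) u v)
      (lds_append_le_append_of_sublist (fun _ => sublist_x_of_sublist_xx) u v)
  | rel4 u v x y =>
    exact le_antisymm
      (lds_append_le_append_of_sublist (fun _ => sublist_yxy_of_sublist_xyx) u v)
      (lds_append_le_append_of_sublist (fun _ => sublist_yxy_of_sublist_xyx) u v)
end

section
/- K-Knuth equivalent words have equal longest strictly increasing subsequence lengths and equal longest strictly decreasing subsequence lengths: if w1 ≡ w2 under K-Knuth equivalence then lis(w1)=lis(w2) and lds(w1)=lds(w2). -/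
/-!
A K-Knuth move rewrites a word only inside a window of at most three letters, and a strictly
monotone subsequence meets that window in a chain of the window. For every chain of one side of a
move, the other side contains a chain of the same length with the same strict lower and upper
bounds, which can be spliced into the subsequence instead. Both `lis` and `lds` are lengths of
longest `r`-chains for a strict order `r`, and the set of moves is invariant under reversing the
order of the letters, so one argument covers both.
-/

open List

variable {α : Type*} (r : α → α → Prop)

def longestChain [DecidableRel r] (w : List α) : ℕ :=
  ((w.sublists.filter fun s => decide (List.IsChain r s)).map length).foldr max 0

/-- `b'` can take the place of `b` inside any `r`-chain. -/
def WithinBounds (b b' : List α) : Prop :=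
  (∀ p, (∀ q ∈ b, r p q) → ∀ e ∈ b', r p e) ∧ (∀ p, (∀ q ∈ b, r q p) → ∀ e ∈ b', r e p)

def ChainsTransfer (m₁ m₂ : List α) : Prop :=
  ∀ b, b <+ m₁ → b.Pairwise r →
    ∃ b', b' <+ m₂ ∧ b'.Pairwise r ∧ b'.length = b.length ∧ WithinBounds r b b'

variable {r}

section longestChain

variable [DecidableRel r] [IsTrans α r]

theorem le_longestChain {w s : List α} (hs : s <+ w) (hc : s.Pairwise r) :
    s.length ≤ longestChain r w :=
  le_max_of_le' 0 (mem_map_of_mem <| mem_filter.2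
    ⟨mem_sublists.2 hs, decide_eq_true (isChain_iff_pairwise.2 hc)⟩) le_rfl

theorem longestChain_le {w : List α} {n : ℕ}
    (h : ∀ s, s <+ w → s.Pairwise r → s.length ≤ n) : longestChain r w ≤ n := by
  refine max_le_of_forall_le _ _ fun _ hk => ?_
  obtain ⟨s, hs, rfl⟩ := mem_map.1 hk
  obtain ⟨hsw, hc⟩ := mem_filter.1 hs
  exact h s (mem_sublists.1 hsw) (isChain_iff_pairwise.1 (of_decide_eq_true hc))

end longestChain

theorem lis_eq_longestChain (w : List ℕ+) : lis w = longestChain (· < ·) w := rfl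

theorem lds_eq_longestChain (w : List ℕ+) : lds w = longestChain (· > ·) w := rfl

theorem List.Pairwise.replace_of_withinBounds {a b b' c : List α}
    (h : (a ++ (b ++ c)).Pairwise r) (hb' : b'.Pairwise r) (hbb' : WithinBounds r b b') :
    (a ++ (b' ++ c)).Pairwise r := by
  simp only [pairwise_append, mem_append] at h ⊢
  obtain ⟨ha, ⟨-, hc, hbc⟩, hac⟩ := h
  refine ⟨ha, ⟨hb', hc, fun e he q hq => hbb'.2 q (fun p hp => hbc p hp q hq) e he⟩, ?_⟩
  rintro p hp q (hq | hq)
  · exact hbb'.1 p (fun q' hq' => hac p hp q' (.inl hq')) q hq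
  · exact hac p hp q (.inr hq)

theorem longestChain_append_le [DecidableRel r] [IsTrans α r] {m₁ m₂ : List α}
    (h : ChainsTransfer r m₁ m₂) (u v : List α) :
    longestChain r (u ++ m₁ ++ v) ≤ longestChain r (u ++ m₂ ++ v) := by
  refine longestChain_le fun s hs hc => ?_
  rw [append_assoc] at hs
  obtain ⟨a, s', rfl, ha, hs'⟩ := sublist_append_iff.1 hs
  obtain ⟨b, c, rfl, hb, hc'⟩ := sublist_append_iff.1 hs'
  obtain ⟨b', hb', hb'c, hlen, hbb'⟩ :=
    h b hb (hc.sublist ((sublist_append_left b c).trans (sublist_append_right a _)))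
  calc (a ++ (b ++ c)).length = (a ++ (b' ++ c)).length := by simp [hlen]
    _ ≤ _ := le_longestChain (by simpa using ha.append (hb'.append hc'))
        (hc.replace_of_withinBounds hb'c hbb')

theorem ChainsTransfer.of_forall_sublist {m₁ m₂ : List α}
    (h : ∀ b, b <+ m₁ → b.Pairwise r → b <+ m₂) : ChainsTransfer r m₁ m₂ :=
  fun b hb hc => ⟨b, h b hb hc, hc, rfl, fun _ hp => hp, fun _ hp => hp⟩

theorem List.eq_of_sublist_pair {l : List α} {x y : α} (h : l <+ [x, y]) :
    l = [] ∨ l = [x] ∨ l = [y] ∨ l = [x, y] := by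
  simpa [sublists, or_comm, or_left_comm] using mem_sublists.2 h

theorem List.eq_of_sublist_triple {l : List α} {x y z : α} (h : l <+ [x, y, z]) :
    l = [] ∨ l = [x] ∨ l = [y] ∨ l = [z] ∨ l = [x, y] ∨ l = [x, z] ∨ l = [y, z] ∨
      l = [x, y, z] := by
  simpa [sublists, or_comm, or_left_comm] using mem_sublists.2 h

theorem chainsTransfer_singleton_pair (a : α) : ChainsTransfer r [a] [a, a] :=
  .of_forall_sublist fun _ hβ _ => hβ.trans (by simp)

section StrictOrder

variable [IsStrictOrder α r] {a b c : α}

theorem chainsTransfer_pair_singleton (a : α) : ChainsTransfer r [a, a] [a] :=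
  .of_forall_sublist fun β hβ hc => by
    rcases eq_of_sublist_pair hβ with rfl | rfl | rfl | rfl <;> simp_all [irrefl]

theorem chainsTransfer_aba_bab (a b : α) : ChainsTransfer r [a, b, a] [b, a, b] :=
  .of_forall_sublist fun β hβ hc => by
    rcases eq_of_sublist_triple hβ with rfl | rfl | rfl | rfl | rfl | rfl | rfl | rfl <;>
      simp_all [irrefl]

theorem chainsTransfer_cab_acb (hab : r a b) (hbc : r b c) :
    ChainsTransfer r [c, a, b] [a, c, b] :=
  have hac := _root_.trans hab hbc
  .of_forall_sublist fun β hβ hc => by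
    rcases eq_of_sublist_triple hβ with rfl | rfl | rfl | rfl | rfl | rfl | rfl | rfl <;>
      simp_all [asymm]

/-- The chain `a c` of `a c b` has no copy in `c a b`; it is replaced by `a b`. -/
theorem chainsTransfer_acb_cab (hab : r a b) (hbc : r b c) :
    ChainsTransfer r [a, c, b] [c, a, b] := by
  intro β hβ hc
  obtain rfl | hne := eq_or_ne β [a, c]
  · refine ⟨[a, b], by simp, by simpa using hab, rfl, ?_, ?_⟩ <;>
      simp only [mem_cons, not_mem_nil, or_false, forall_eq_or_imp, forall_eq, and_imp]
    · exact fun p hpa _ => ⟨hpa, _root_.trans hpa hab⟩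
    · exact fun p hap hcp => ⟨hap, _root_.trans hbc hcp⟩
  · refine ⟨β, ?_, hc, rfl, fun _ hp => hp, fun _ hp => hp⟩
    rcases eq_of_sublist_triple hβ with rfl | rfl | rfl | rfl | rfl | rfl | rfl | rfl <;>
      simp_all [asymm]

theorem chainsTransfer_bca_bac (hab : r a b) (hbc : r b c) :
    ChainsTransfer r [b, c, a] [b, a, c] :=
  have hac := _root_.trans hab hbc
  .of_forall_sublist fun β hβ hc => by
    rcases eq_of_sublist_triple hβ with rfl | rfl | rfl | rfl | rfl | rfl | rfl | rfl <;>
      simp_all [asymm]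

/-- The chain `a c` of `b a c` has no copy in `b c a`; it is replaced by `b c`. -/
theorem chainsTransfer_bac_bca (hab : r a b) (hbc : r b c) :
    ChainsTransfer r [b, a, c] [b, c, a] := by
  intro β hβ hc
  obtain rfl | hne := eq_or_ne β [a, c]
  · refine ⟨[b, c], by simp, by simpa using hbc, rfl, ?_, ?_⟩ <;>
      simp only [mem_cons, not_mem_nil, or_false, forall_eq_or_imp, forall_eq, and_imp]
    · exact fun p hpa _ => ⟨_root_.trans hpa hab, _root_.trans (_root_.trans hpa hab) hbc⟩
    · exact fun p _ hcp => ⟨_root_.trans hbc hcp, hcp⟩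
  · refine ⟨β, ?_, hc, rfl, fun _ hp => hp, fun _ hp => hp⟩
    rcases eq_of_sublist_triple hβ with rfl | rfl | rfl | rfl | rfl | rfl | rfl | rfl <;>
      simp_all [asymm]

end StrictOrder

theorem longestChain_append_eq [DecidableRel r] [IsTrans α r] {m₁ m₂ : List α}
    (h₁₂ : ChainsTransfer r m₁ m₂) (h₂₁ : ChainsTransfer r m₂ m₁) (u v : List α) :
    longestChain r (u ++ m₁ ++ v) = longestChain r (u ++ m₂ ++ v) :=
  (longestChain_append_le h₁₂ u v).antisymm (longestChain_append_le h₂₁ u v)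

section KKnuth

variable {r : ℕ+ → ℕ+ → Prop} [DecidableRel r] [IsStrictOrder ℕ+ r]

theorem KKnuthRel.longestChain_eq
    (hr : (∀ ⦃x y : ℕ+⦄, x < y → r x y) ∨ ∀ ⦃x y : ℕ+⦄, x < y → r y x) {w₁ w₂ : List ℕ+}
    (h : KKnuthRel w₁ w₂) : longestChain r w₁ = longestChain r w₂ := by
  cases h with
  | rel1 u v x y z hxy hyz =>
    refine longestChain_append_eq ?_ ?_ u v <;> rcases hr with hr | hr
    exacts [chainsTransfer_acb_cab (hr hxy) (hr hyz), chainsTransfer_cab_acb (hr hyz) (hr hxy),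
      chainsTransfer_cab_acb (hr hxy) (hr hyz), chainsTransfer_acb_cab (hr hyz) (hr hxy)]
  | rel2 u v x y z hxy hyz =>
    refine longestChain_append_eq ?_ ?_ u v <;> rcases hr with hr | hr
    exacts [chainsTransfer_bac_bca (hr hxy) (hr hyz), chainsTransfer_bca_bac (hr hyz) (hr hxy),
      chainsTransfer_bca_bac (hr hxy) (hr hyz), chainsTransfer_bac_bca (hr hyz) (hr hxy)]
  | rel3 u v x =>
    exact longestChain_append_eq (chainsTransfer_singleton_pair x)
      (chainsTransfer_pair_singleton x) u v
  | rel4 u v x y =>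
    exact longestChain_append_eq (chainsTransfer_aba_bab x y) (chainsTransfer_aba_bab y x) u v

theorem KKnuth.longestChain_eq
    (hr : (∀ ⦃x y : ℕ+⦄, x < y → r x y) ∨ ∀ ⦃x y : ℕ+⦄, x < y → r y x) {w₁ w₂ : List ℕ+}
    (h : KKnuth w₁ w₂) : longestChain r w₁ = longestChain r w₂ := by
  induction h with
  | rel _ _ h => exact h.longestChain_eq hr
  | refl => rfl
  | symm _ _ _ ih => exact ih.symm
  | trans _ _ _ _ _ ih₁ ih₂ => exact ih₁.trans ih₂

end KKnuth

/-- K-Knuth equivalent words have equal longest strictly increasing subsequence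
lengths and equal longest strictly decreasing subsequence lengths. -/
theorem kKnuth_lis_lds (w1 w2 : List ℕ+) (h : KKnuth w1 w2) :
    lis w1 = lis w2 ∧ lds w1 = lds w2 := by
  simp only [lis_eq_longestChain, lds_eq_longestChain]
  exact ⟨h.longestChain_eq (.inl fun _ _ => id), h.longestChain_eq (.inr fun _ _ => id)⟩
end

section
/- In a 01-filling of a stack polyomino (convex, intersection-free polyomino with left-justified rows), any ne-chain of the filling lies entirely inside a single maximal rectangle contained in the polyomino; in particular, a k-crossing (se-chain) or k-nesting (ne-chain) as defined via smallest enclosing rectangles is contained in some rectangle of the form (set of columns of some row) × (set of rows of some column) that is a subset of the polyomino. -/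
lemma aux_row (P : Finset (ℤ × ℤ))
    (hrowconv : ∀ x1 x2 x y : ℤ, (x1, y) ∈ P → (x2, y) ∈ P → x1 ≤ x → x ≤ x2 → (x, y) ∈ P)
    (hleft : ∃ x0 : ℤ, ∀ x y : ℤ, (x, y) ∈ P → x0 ≤ x ∧ (x0, y) ∈ P)
    (c y0 : ℤ) (h0 : (c, y0) ∈ P) :
    ∃ r : ℤ, (c, r) ∈ P ∧ ∀ x y : ℤ, (x, r) ∈ P → (c, y) ∈ P → (x, y) ∈ P := by
  obtain ⟨x0, hx0⟩ := hleft
  set R : Finset ℤ := (P.filter (fun p => p.1 = c)).image Prod.snd with hR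
  have hRmem : ∀ y, y ∈ R ↔ (c, y) ∈ P := by
    intro y
    simp only [hR, Finset.mem_image, Finset.mem_filter]
    constructor
    · rintro ⟨⟨a, b⟩, ⟨hp, h1⟩, h2⟩
      simp only at h1 h2
      subst h1; subst h2; exact hp
    · intro h; exact ⟨(c, y), ⟨h, rfl⟩, rfl⟩
  have hRne : R.Nonempty := ⟨y0, (hRmem y0).mpr h0⟩
  set f : ℤ → WithBot ℤ := fun y => ((P.filter (fun p => p.2 = y)).image Prod.fst).max with hf
  obtain ⟨r, hrR, hrmin⟩ := R.exists_min_image f hRne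
  refine ⟨r, (hRmem r).mp hrR, ?_⟩
  intro x y hxr hcy
  have hxfr : (x : WithBot ℤ) ≤ f r := by
    apply Finset.le_max
    simp only [Finset.mem_image, Finset.mem_filter]
    exact ⟨(x, r), ⟨hxr, rfl⟩, rfl⟩
  have hfy : f r ≤ f y := hrmin y ((hRmem y).mpr hcy)
  have hyne : ((P.filter (fun p => p.2 = y)).image Prod.fst).Nonempty := by
    refine ⟨c, ?_⟩
    simp only [Finset.mem_image, Finset.mem_filter]
    exact ⟨(c, y), ⟨hcy, rfl⟩, rfl⟩
  set s := (P.filter (fun p => p.2 = y)).image Prod.fst with hs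
  have hmax : f y = ((s.max' hyne : ℤ) : WithBot ℤ) := (s.coe_max' hyne).symm
  have hxle : x ≤ s.max' hyne := by
    have := le_trans hxfr hfy
    rw [hmax] at this
    exact_mod_cast this
  have hmem : (s.max' hyne, y) ∈ P := by
    have := s.max'_mem hyne
    simp only [hs, Finset.mem_image, Finset.mem_filter] at this
    obtain ⟨⟨a, b⟩, ⟨hp, h1⟩, h2⟩ := this
    simp only at h1 h2
    subst h1; subst h2; exact hp
  exact hrowconv x0 (s.max' hyne) x y (hx0 c y hcy).2 hmem (hx0 x r hxr).1 hxle

/-- In a 01-filling of a stack polyomino (a finite, row- and column-convex,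
intersection-free subset of `ℤ²` with left-justified rows), any ne-chain of the
filling (a set of marked cells, pairwise strictly increasing in both coordinates,
whose smallest enclosing rectangle lies in the polyomino) is contained in a
rectangle of the form (columns of some row `r`) × (rows of some column `c`) that
is itself contained in the polyomino. -/
theorem neChain_in_maximal_rectangle (P : Finset (ℤ × ℤ)) (hne : P.Nonempty)
    -- row-convexity
    (hrowconv : ∀ x1 x2 x y : ℤ, (x1, y) ∈ P → (x2, y) ∈ P → x1 ≤ x → x ≤ x2 → (x, y) ∈ P)
    -- column-convexity
    (hcolconv : ∀ x y1 y2 y : ℤ, (x, y1) ∈ P → (x, y2) ∈ P → y1 ≤ y → y ≤ y2 → (x, y) ∈ P)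
    -- intersection-free: any two columns are comparable
    (hcomp : ∀ x1 x2 : ℤ,
      {y : ℤ | (x1, y) ∈ P} ⊆ {y : ℤ | (x2, y) ∈ P} ∨
      {y : ℤ | (x2, y) ∈ P} ⊆ {y : ℤ | (x1, y) ∈ P})
    -- rows are left-justified
    (hleft : ∃ x0 : ℤ, ∀ x y : ℤ, (x, y) ∈ P → x0 ≤ x ∧ (x0, y) ∈ P)
    -- a 01-filling of P
    (F : ℤ × ℤ → Bool) (hF : ∀ p, F p = true → p ∈ P)
    -- C is a set of cells marked with 1
    (C : Finset (ℤ × ℤ)) (hC : ∀ p ∈ C, F p = true)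
    -- the smallest enclosing rectangle of C lies in P
    (hrect : ∀ p : ℤ × ℤ, (∃ q ∈ C, ∃ q' ∈ C, q.1 ≤ p.1 ∧ p.1 ≤ q'.1) →
      (∃ r ∈ C, ∃ r' ∈ C, r.2 ≤ p.2 ∧ p.2 ≤ r'.2) → p ∈ P)
    -- C is an ne-chain
    (hchain : ∀ p ∈ C, ∀ q ∈ C, p ≠ q →
      (p.1 < q.1 ∧ p.2 < q.2) ∨ (q.1 < p.1 ∧ q.2 < p.2)) :
    ∃ r c : ℤ,
      (∀ p ∈ C, (p.1, r) ∈ P ∧ (c, p.2) ∈ P) ∧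
      ∀ x y : ℤ, (x, r) ∈ P → (c, y) ∈ P → (x, y) ∈ P := by
  have hCP : ∀ p ∈ C, p ∈ P := fun p hp => hF p (hC p hp)
  rcases C.eq_empty_or_nonempty with hCe | hCne
  · subst hCe
    obtain ⟨⟨a, b⟩, hab⟩ := hne
    obtain ⟨r, hr, hmax⟩ := aux_row P hrowconv hleft a b hab
    exact ⟨r, a, by simp, hmax⟩
  · obtain ⟨q, hqC, hqmax⟩ := C.exists_max_image Prod.fst hCne
    have hqP : q ∈ P := hCP q hqC
    obtain ⟨r, hr, hmax⟩ := aux_row P hrowconv hleft q.1 q.2 (by simpa using hqP)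
    refine ⟨r, q.1, ?_, hmax⟩
    intro p hpC
    have hpP : p ∈ P := hCP p hpC
    have hcp2 : (q.1, p.2) ∈ P := by
      refine hrect (q.1, p.2) ⟨q, hqC, q, hqC, le_refl _, le_refl _⟩
        ⟨p, hpC, p, hpC, le_refl _, le_refl _⟩
    have hp1 : p.1 ≤ q.1 := hqmax p hpC
    refine ⟨?_, hcp2⟩
    obtain ⟨x0, hx0⟩ := hleft
    exact hrowconv x0 q.1 p.1 r (hx0 q.1 r hr).2 hr (hx0 p.1 p.2 hpP).1 hp1
end
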